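/- Let e ≥ 4 and 0 < a < b < c < d ≤ e, and let B be the block of e-weight 4 with notation ⟨4^a, 5^{b−a}, 4^{c−b}, 5^{d−c}, 4^{e−d}⟩, which forms exactly two [4:1]-pairs, via the residues carried by runner a. and by runner c respectively. Then the unique partition lying in B that is exceptional for both pairs is ⟨a_{(1,1)}, c_{(1,1)}⟩. -/

import Mathlib

/-- A partition: a weakly decreasing function `parts : ℕ → ℕ` (0-indexed),
having exactly `len` nonzero parts. -/
structure AbacusPartition where
  parts : ℕ → ℕ
  antitone : Antitone parts
  len : ℕ
  pos_of_lt : ∀ i, i < len → 0 < parts i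
  zero_of_ge : ∀ i, len ≤ i → parts i = 0

/-- The beta-set (abacus display) of a partition with `r` beads:
positions `λ_i + r - i` for `1 ≤ i ≤ r` (0-indexed: `parts i + (r - 1 - i)`). -/
def AbacusPartition.betaSet (lam : AbacusPartition) (r : ℕ) : Finset ℕ :=
  (Finset.range r).image (fun i => lam.parts i + (r - 1 - i))

/-- e-weight of the bead at position `p` of the display `B`: the number of
unoccupied positions `q < p` with `q ≡ p (mod e)`. -/
def beadWeight (e : ℕ) (B : Finset ℕ) (p : ℕ) : ℕ :=
  ((Finset.range p).filter (fun q => q % e = p % e ∧ q ∉ B)).card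

/-- Total e-weight of the display `B`. -/
def abacusWeight (e : ℕ) (B : Finset ℕ) : ℕ :=
  B.sum (fun p => beadWeight e B p)

/-- e-weight of a partition (computed from the display with `lam.len` beads). -/
def eWeight (e : ℕ) (lam : AbacusPartition) : ℕ :=
  abacusWeight e (lam.betaSet lam.len)

/-- Positions on runner `res` (positions `p` with `p % e = res`), in increasing
order, up to a bound strictly beyond every bead. -/
def posList (e : ℕ) (B : Finset ℕ) (res : ℕ) : List ℕ :=
  (List.range (B.sup id + e + 2)).filter (fun p => p % e == res)

/-- One step of the signature-reduction automaton; the state is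
`(list of surviving '+' positions, stack of pending '−' positions)`.
A '−' occurs at `p` when `p` is occupied and its preceding position unoccupied
(position `-1` counts as occupied); a '+' occurs at `p` when `p` is unoccupied
and its preceding position occupied.  A '+' cancels the most recent pending '−'. -/
def signStep (B : Finset ℕ) (st : List ℕ × List ℕ) (p : ℕ) : List ℕ × List ℕ :=
  if p ∈ B ∧ ¬(p = 0 ∨ p - 1 ∈ B) then (st.1, p :: st.2)
  else if p ∉ B ∧ (p = 0 ∨ p - 1 ∈ B) then
    (match st.2 with
     | [] => (p :: st.1, ([] : List ℕ))
     | _ :: tl => (st.1, tl))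
  else st

/-- Final state of the reduction of the `j`-signature on runner `res`:
`(surviving '+' (conormal) positions, surviving '−' (normal) positions)`,
each list in decreasing order of position. -/
def signState (e : ℕ) (B : Finset ℕ) (res : ℕ) : List ℕ × List ℕ :=
  (posList e B res).foldl (signStep B) ([], [])

/-- Positions of the normal beads on runner `res`, in decreasing order. -/
def normalList (e : ℕ) (B : Finset ℕ) (res : ℕ) : List ℕ := (signState e B res).2

/-- The conormal positions on runner `res`, in decreasing order. -/
def conormalList (e : ℕ) (B : Finset ℕ) (res : ℕ) : List ℕ := (signState e B res).1

/-- ε: the number of normal beads on runner `res`. -/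
def epsB (e : ℕ) (B : Finset ℕ) (res : ℕ) : ℕ := (normalList e B res).length

/-- φ: the number of conormal positions on runner `res`. -/
def phiB (e : ℕ) (B : Finset ℕ) (res : ℕ) : ℕ := (conormalList e B res).length

/-- ε_j of a partition: in the display with `lam.len` beads, residue `j`
is carried by runner `(j + lam.len) % e`. -/
def epsP (e : ℕ) (lam : AbacusPartition) (j : ℕ) : ℕ :=
  epsB e (lam.betaSet lam.len) ((j + lam.len) % e)

/-- φ_j of a partition. -/
def phiP (e : ℕ) (lam : AbacusPartition) (j : ℕ) : ℕ :=
  phiB e (lam.betaSet lam.len) ((j + lam.len) % e)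

/-- Move each bead in `ps` from its position `p` to `p - 1`. -/
def moveDown (B : Finset ℕ) (ps : List ℕ) : Finset ℕ :=
  ps.foldl (fun C p => insert (p - 1) (C.erase p)) B

/-- For each position `p` in `ps`, move the bead at `p - 1` to `p`. -/
def moveUp (B : Finset ℕ) (ps : List ℕ) : Finset ℕ :=
  ps.foldl (fun C p => insert p (C.erase (p - 1))) B

/-- Ẽ^t on displays: move the `t` normal beads at the smallest positions down. -/
def Etil (e : ℕ) (B : Finset ℕ) (res t : ℕ) : Finset ℕ :=
  moveDown B ((normalList e B res).reverse.take t)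

/-- F̃^t on displays: for the `t` largest conormal positions `p`,
move the bead at `p - 1` to `p`. -/
def Ftil (e : ℕ) (B : Finset ℕ) (res t : ℕ) : Finset ℕ :=
  moveUp B ((conormalList e B res).take t)

/-- Number of beads of `B` on runner `i`. -/
def runnerCount (e : ℕ) (B : Finset ℕ) (i : ℕ) : ℕ :=
  (B.filter (fun p => p % e = i)).card

/-- Sum of the e-weights of the beads of `B` on runner `i` (this is `|λ(i)|`). -/
def runnerWeight (e : ℕ) (B : Finset ℕ) (i : ℕ) : ℕ :=
  (B.filter (fun p => p % e = i)).sum (beadWeight e B)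

/-- The display of the e-core: slide every bead as far up its runner as possible. -/
def coreBeta (e : ℕ) (B : Finset ℕ) : Finset ℕ :=
  (Finset.range e).biUnion
    (fun i => (Finset.range (runnerCount e B i)).image (fun m => i + m * e))

/-- `lam` lies in the block with bead counts `bd 0, …, bd (e-1)` and e-weight `w`:
displayed with `r = bd 0 + ⋯ + bd (e-1)` beads it has `bd i` beads on runner `i`
and e-weight `w`. -/
def inBlock (e : ℕ) (bd : ℕ → ℕ) (w : ℕ) (lam : AbacusPartition) : Prop :=
  lam.len ≤ (Finset.range e).sum bd ∧
  (∀ i < e, runnerCount e (lam.betaSet ((Finset.range e).sum bd)) i = bd i) ∧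
  abacusWeight e (lam.betaSet ((Finset.range e).sum bd)) = w

/-- The single-runner beta-set of the partition with parts `ρ` and `c` beads. -/
def oneRunnerBeta (rho : List ℕ) (c : ℕ) : Finset ℕ :=
  (Finset.range c).image (fun t => rho.getD t 0 + (c - 1 - t))

/-- The display of the partition `⟨0_{lamOf 0}, …, (e−1)_{lamOf (e−1)} | bd 0, …, bd (e−1)⟩`. -/
def display (e : ℕ) (bd : ℕ → ℕ) (lamOf : ℕ → List ℕ) : Finset ℕ :=
  (Finset.range e).biUnion
    (fun i => (oneRunnerBeta (lamOf i) (bd i)).image (fun m => i + m * e))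

/-- The operator Ḟ at runner `res`: apply F̃^{φ} (valid when ε = 0 < φ). -/
def dotF (e : ℕ) (B : Finset ℕ) (res : ℕ) : Finset ℕ := Ftil e B res (phiB e B res)

/-- Apply a chain of Ḟ steps. -/
def chainFold (e : ℕ) : Finset ℕ → List ℕ → Finset ℕ
  | B, [] => B
  | B, i :: rest => chainFold e (dotF e B i) rest

/-- The chain of Ḟ steps is semisimple: at each step ε = 0 before, φ > 0 before,
and φ = 0 afterwards. -/
def validChain (e : ℕ) : Finset ℕ → List ℕ → Prop
  | _, [] => True
  | B, i :: rest =>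
      (epsB e B i = 0 ∧ 0 < phiB e B i ∧ phiB e (dotF e B i) i = 0) ∧
      validChain e (dotF e B i) rest

/-- `B` induces semisimply to `C` (displays with the same number of beads). -/
def InducesSS (e : ℕ) (B C : Finset ℕ) : Prop :=
  ∃ L : List ℕ, validChain e B L ∧ chainFold e B L = C

/-- Re-display a beta-set with `s` additional beads. -/
def shiftBeta (B : Finset ℕ) (s : ℕ) : Finset ℕ :=
  B.image (· + s) ∪ Finset.range s

/-- `B` induces semisimply to the partition displayed by `C` (where `C` may use a
different number of beads). -/
def InducesToPartition (e : ℕ) (B C : Finset ℕ) : Prop :=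
  ∃ D : Finset ℕ, InducesSS e B D ∧ shiftBeta D C.card = shiftBeta C D.card

/-- The block with bead counts `bd` and weight `w` is Rouquier:
for all `i < j < e`, `bd i − bd j ≥ w` or `bd j − bd i ≥ w − 1`. -/
def IsRouquier (e w : ℕ) (bd : ℕ → ℕ) : Prop :=
  ∀ i j, i < j → j < e → bd j + w ≤ bd i ∨ bd i + (w - 1) ≤ bd j

/-- `lam` is e-singular: it has `e` consecutive equal nonzero parts. -/
def ESingular (e : ℕ) (lam : AbacusPartition) : Prop :=
  ∃ i, lam.parts i ≠ 0 ∧ ∀ m < e, lam.parts (i + m) = lam.parts i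

/-- `lam` is e-regular. -/
def ERegular (e : ℕ) (lam : AbacusPartition) : Prop := ¬ ESingular e lam

/-- The induced e-sequence of the display `B`, as a multiset: each bead of
positive weight `w` at position `p` contributes `p, p−e, …, p−(w−1)e`. -/
def inducedSeq (e : ℕ) (B : Finset ℕ) : Multiset ℕ :=
  B.val.bind (fun p => (Multiset.range (beadWeight e B p)).map (fun m => p - m * e))

/-- The product order: `lam ≤_P mu` iff they have the same e-core and e-weight and
`s(mu)_r ≥ s(lam)_r` componentwise for all sufficiently large `r`. -/
def ProdLE (e : ℕ) (lam mu : AbacusPartition) : Prop :=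
  (∃ r, lam.len ≤ r ∧ mu.len ≤ r ∧
    coreBeta e (lam.betaSet r) = coreBeta e (mu.betaSet r)) ∧
  eWeight e lam = eWeight e mu ∧
  ∃ r0, ∀ r, r0 ≤ r →
    List.Forall₂ (· ≤ ·) ((inducedSeq e (lam.betaSet r)).sort (· ≤ ·))
      ((inducedSeq e (mu.betaSet r)).sort (· ≤ ·))


/-!
The weight of the block is the sum of the weights of its runners, each runner read as a
one-runner abacus (`abacusWeight 1`). On runner `i ≥ 1` the signature only compares the rows of
runners `i - 1` and `i`: a `−` where only runner `i` has a bead, a `+` where only runner `i - 1`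
has one. A finite check shows that for rows with 4 and 5 beads and total weight at most 2,
`ε ≥ 2` happens only for the rows `{0,1,2,3}` and `{0,1,2,4,5}`, of weights 0 and 2; so `ε ≥ 2`
forces weight at least 2 on the pair of runners. The pairs `a - 1, a` and `c - 1, c` are disjoint
and the total weight is 4, so when both `ε` are at least 2 each pair carries weight exactly 2 in
that configuration and every other runner has weight 0, i.e. displays the empty partition.
-/

open Finset

section Runners

variable {e i : ℕ}

def runnerBeta (e : ℕ) (B : Finset ℕ) (i : ℕ) : Finset ℕ :=
  (B.filter (fun p => p % e = i)).image (· / e)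

lemma mod_eq_iff_exists_add_mul (hi : i < e) {p : ℕ} : p % e = i ↔ ∃ m, i + m * e = p := by
  constructor
  · rintro rfl
    exact ⟨p / e, Nat.mod_add_div' p e⟩
  · rintro ⟨m, rfl⟩
    rw [Nat.add_mul_mod_self_right, Nat.mod_eq_of_lt hi]

lemma add_mul_div_of_lt (hi : i < e) (m : ℕ) : (i + m * e) / e = m := by
  rw [Nat.add_mul_div_right _ _ (by omega), Nat.div_eq_of_lt hi, zero_add]

lemma mem_runnerBeta (hi : i < e) {B : Finset ℕ} {m : ℕ} :
    m ∈ runnerBeta e B i ↔ i + m * e ∈ B := by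
  simp only [runnerBeta, mem_image, mem_filter, mod_eq_iff_exists_add_mul hi]
  constructor
  · rintro ⟨_, ⟨hp, n, rfl⟩, rfl⟩
    rwa [add_mul_div_of_lt hi]
  · exact fun h => ⟨_, ⟨h, m, rfl⟩, add_mul_div_of_lt hi m⟩

lemma filter_mod_eq_image_runnerBeta (hi : i < e) (B : Finset ℕ) :
    B.filter (fun p => p % e = i) = (runnerBeta e B i).image (fun m => i + m * e) := by
  ext p
  simp only [mem_filter, mem_image, mem_runnerBeta hi, mod_eq_iff_exists_add_mul hi]
  constructor
  · rintro ⟨hp, m, rfl⟩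
    exact ⟨m, hp, rfl⟩
  · rintro ⟨m, hm, rfl⟩
    exact ⟨hm, m, rfl⟩

lemma add_mul_injective (he : 0 < e) : Function.Injective (fun m => i + m * e) :=
  fun _ _ h => Nat.eq_of_mul_eq_mul_right he (Nat.add_left_cancel h)

lemma runnerCount_eq_card_runnerBeta (hi : i < e) (B : Finset ℕ) :
    runnerCount e B i = (runnerBeta e B i).card := by
  rw [runnerCount, filter_mod_eq_image_runnerBeta hi,
    card_image_of_injective _ (add_mul_injective (by omega))]

lemma beadWeight_add_mul (hi : i < e) (B : Finset ℕ) (m : ℕ) :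
    beadWeight e B (i + m * e) = beadWeight 1 (runnerBeta e B i) m := by
  have hset : (range (i + m * e)).filter (fun q => q % e = (i + m * e) % e ∧ q ∉ B) =
      ((range m).filter (· ∉ runnerBeta e B i)).image (fun n => i + n * e) := by
    ext q
    simp only [mem_filter, mem_range, mem_image, mem_runnerBeta hi,
      (mod_eq_iff_exists_add_mul hi).mpr ⟨m, rfl⟩, mod_eq_iff_exists_add_mul hi]
    constructor
    · rintro ⟨hq, ⟨n, rfl⟩, hn⟩
      exact ⟨n, ⟨Nat.lt_of_mul_lt_mul_right (by omega : n * e < m * e), hn⟩, rfl⟩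
    · rintro ⟨n, ⟨hn, hnB⟩, rfl⟩
      exact ⟨by nlinarith, ⟨n, rfl⟩, hnB⟩
  simp only [beadWeight, hset, Nat.mod_one, true_and]
  exact card_image_of_injective _ (add_mul_injective (by omega))

lemma runnerWeight_eq_abacusWeight_one (hi : i < e) (B : Finset ℕ) :
    runnerWeight e B i = abacusWeight 1 (runnerBeta e B i) := by
  rw [runnerWeight, filter_mod_eq_image_runnerBeta hi,
    sum_image fun x _ y _ h => add_mul_injective (by omega) h]
  exact sum_congr rfl fun m _ => beadWeight_add_mul hi B m

lemma abacusWeight_eq_sum_runnerWeight (he : 0 < e) (B : Finset ℕ) :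
    abacusWeight e B = ∑ i ∈ range e, runnerWeight e B i :=
  (sum_fiberwise_of_maps_to (fun p _ => mem_range.mpr (Nat.mod_lt p he)) _).symm

lemma sum_abacusWeight_one_runnerBeta (he : 0 < e) (B : Finset ℕ) :
    ∑ k ∈ range e, abacusWeight 1 (runnerBeta e B k) = abacusWeight e B := by
  rw [abacusWeight_eq_sum_runnerWeight he]
  exact sum_congr rfl fun k hk => (runnerWeight_eq_abacusWeight_one (mem_range.mp hk) B).symm

lemma runnerBeta_display (hi : i < e) (bd : ℕ → ℕ) (lamOf : ℕ → List ℕ) :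
    runnerBeta e (display e bd lamOf) i = oneRunnerBeta (lamOf i) (bd i) := by
  ext m
  simp only [mem_runnerBeta hi, display, mem_biUnion, mem_range, mem_image]
  constructor
  · rintro ⟨j, hj, n, hn, hjn⟩
    obtain rfl : j = i := by
      simpa [Nat.mod_eq_of_lt hj, Nat.mod_eq_of_lt hi] using congrArg (· % e) hjn
    obtain rfl : n = m := add_mul_injective (by omega) hjn
    exact hn
  · exact fun hm => ⟨i, hi, m, hm, rfl⟩

lemma eq_display_iff (he : 0 < e) (B : Finset ℕ) (bd : ℕ → ℕ) (lamOf : ℕ → List ℕ) :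
    B = display e bd lamOf ↔ ∀ i < e, runnerBeta e B i = oneRunnerBeta (lamOf i) (bd i) := by
  constructor
  · rintro rfl i hi
    exact runnerBeta_display hi bd lamOf
  · intro h
    ext p
    have hp := Nat.mod_lt p he
    rw [← Nat.mod_add_div' p e, ← mem_runnerBeta hp, ← mem_runnerBeta hp,
      runnerBeta_display hp, h _ hp]

end Runners

section OneRunner

lemma beadWeight_one (S : Finset ℕ) (m : ℕ) :
    beadWeight 1 S m = ((range m).filter (· ∉ S)).card := by
  simp only [beadWeight, Nat.mod_one, true_and]

lemma subset_range_of_abacusWeight_one_le {S : Finset ℕ} {w : ℕ} (hw : abacusWeight 1 S ≤ w) :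
    S ⊆ range (S.card + w) := by
  intro m hm
  have hgaps : ((range m).filter (· ∉ S)).card ≤ w := by
    rw [← beadWeight_one]
    exact (single_le_sum (fun _ _ => Nat.zero_le _) hm).trans hw
  have hbeads : ((range m).filter (· ∈ S)).card < S.card :=
    card_lt_card ⟨fun x hx => (mem_filter.mp hx).2,
      fun h => by simpa using h hm⟩
  have hsplit := card_filter_add_card_filter_not (s := range m) (· ∈ S)
  rw [card_range] at hsplit
  exact mem_range.mpr (by omega)

lemma eq_range_of_abacusWeight_one_eq_zero {S : Finset ℕ} (hw : abacusWeight 1 S = 0) :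
    S = range S.card :=
  eq_of_subset_of_card_le (subset_range_of_abacusWeight_one_le hw.le) (by simp)

lemma oneRunnerBeta_nil (n : ℕ) : oneRunnerBeta [] n = range n := by
  ext x
  simp only [oneRunnerBeta, mem_image, mem_range, List.getD_nil]
  exact ⟨fun ⟨t, ht, hx⟩ => by omega, fun hx => ⟨n - 1 - x, by omega, by omega⟩⟩

end OneRunner

section Signature

/-- The signature of runner `i ≥ 1` read off the rows `P` of runner `i - 1` and `Q` of runner `i`:
row `m` gives a `−` if `m ∈ Q \ P` and a `+` if `m ∈ P \ Q`. The state counts the surviving `+`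
and the pending `−` signs of `signStep`. -/
def pairSignStep (P Q : Finset ℕ) (st : ℕ × ℕ) (m : ℕ) : ℕ × ℕ :=
  if m ∈ Q ∧ m ∉ P then (st.1, st.2 + 1)
  else if m ∉ Q ∧ m ∈ P then
    (match st.2 with
     | 0 => (st.1 + 1, 0)
     | k + 1 => (st.1, k))
  else st

def pairEps (P Q : Finset ℕ) (k : ℕ) : ℕ :=
  ((List.range k).foldl (pairSignStep P Q) (0, 0)).2

lemma foldl_eq_self_of_forall_mem {α β : Type*} {f : α → β → α} {l : List β}
    (h : ∀ a, ∀ b ∈ l, f a b = a) (a : α) : l.foldl f a = a :=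
  (List.foldl_ext f (fun a _ => a) a h).trans (List.foldl_fixed l)

lemma pairEps_eq_of_subset_range {P Q : Finset ℕ} {k K : ℕ} (hP : P ⊆ range k)
    (hQ : Q ⊆ range k) (hkK : k ≤ K) : pairEps P Q K = pairEps P Q k := by
  obtain ⟨n, rfl⟩ := Nat.exists_eq_add_of_le hkK
  rw [pairEps, List.range_add, List.foldl_append, foldl_eq_self_of_forall_mem, pairEps]
  intro st m hm
  obtain ⟨x, -, rfl⟩ := List.mem_map.mp hm
  have hnP : k + x ∉ P := fun h => by simpa using hP h
  have hnQ : k + x ∉ Q := fun h => by simpa using hQ h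
  simp [pairSignStep, hnP, hnQ]

variable {e i : ℕ}

lemma signStep_add_mul (h1 : 1 ≤ i) (hi : i < e) (B : Finset ℕ) (st : List ℕ × List ℕ)
    (m : ℕ) :
    Prod.map List.length List.length (signStep B st (i + m * e)) =
      pairSignStep (runnerBeta e B (i - 1)) (runnerBeta e B i)
        (Prod.map List.length List.length st) m := by
  have hQ : i + m * e ∈ B ↔ m ∈ runnerBeta e B i := (mem_runnerBeta hi).symm
  have hP : i + m * e - 1 ∈ B ↔ m ∈ runnerBeta e B (i - 1) := by
    rw [mem_runnerBeta (by omega), show i + m * e - 1 = i - 1 + m * e by omega]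
  have h0 : i + m * e ≠ 0 := by omega
  unfold signStep pairSignStep
  simp only [hQ, hP, h0, false_or]
  split_ifs
  · rfl
  · rcases st with ⟨_, _ | _⟩ <;> rfl
  · rfl

lemma filter_range_mul_eq_map (hi : i < e) (K : ℕ) :
    (List.range (K * e)).filter (· % e == i) = (List.range K).map (fun m => i + m * e) := by
  induction K with
  | zero => simp
  | succ K ih =>
    have hlast : (List.range e).filter (fun x => (K * e + x) % e == i) = [i] := by
      rw [List.filter_congr (q := fun x => decide (x = i)), List.filter_eq, List.count_range,
        if_pos hi, List.replicate_one]
      intro x hx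
      simp [Nat.add_mod, Nat.mod_eq_of_lt (List.mem_range.mp hx), Bool.beq_eq_decide_eq]
    rw [Nat.succ_mul, List.range_add, List.filter_append, ih, List.filter_map, List.range_succ,
      List.map_append]
    simp only [Function.comp_def, hlast, List.map_cons, List.map_nil]
    congr 2
    ring

lemma runnerBeta_subset_range_sup (B : Finset ℕ) (i : ℕ) :
    runnerBeta e B i ⊆ range (B.sup id + 1) := by
  intro m hm
  obtain ⟨p, hp, rfl⟩ := mem_image.mp hm
  exact mem_range.mpr (Nat.lt_succ_of_le ((Nat.div_le_self p e).trans
    (le_sup (f := id) (mem_filter.mp hp).1)))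

lemma epsB_eq_pairEps (h1 : 1 ≤ i) (hi : i < e) {B : Finset ℕ} {k : ℕ}
    (hP : runnerBeta e B (i - 1) ⊆ range k) (hQ : runnerBeta e B i ⊆ range k) :
    epsB e B i = pairEps (runnerBeta e B (i - 1)) (runnerBeta e B i) k := by
  set N := B.sup id + e + 2
  -- Pad `posList` up to `N * e` so that runner `i` is read row by row; the padded positions
  -- lie beyond every bead and produce no signs.
  have hnoop : ∀ st, ∀ p ∈ (List.range (N * e - N)).map (N + ·), signStep B st p = st := by
    intro st p hp
    obtain ⟨x, -, rfl⟩ := List.mem_map.mp hp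
    have hout : ∀ q, B.sup id < q → q ∉ B := fun q hq hqB =>
      (le_sup (f := id) hqB).not_gt hq
    simp [signStep, hout (N + x) (by omega), hout (N + x - 1) (by omega)]
  have hext : posList e B i ++ ((List.range (N * e - N)).map (N + ·)).filter (· % e == i) =
      (List.range (N * e)).filter (· % e == i) := by
    rw [posList, ← List.filter_append, ← List.range_add,
      Nat.add_sub_cancel' (Nat.le_mul_of_pos_right N (by omega))]
  have hfold : epsB e B i = pairEps (runnerBeta e B (i - 1)) (runnerBeta e B i) N := by
    rw [epsB, normalList, signState, ← foldl_eq_self_of_forall_mem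
      (fun st p hp => hnoop st p (List.mem_filter.mp hp).1) (List.foldl _ _ (posList e B i)),
      ← List.foldl_append, hext, filter_range_mul_eq_map hi, List.foldl_map, pairEps]
    exact congrArg Prod.snd
      (List.foldl_hom _ fun st m => (signStep_add_mul h1 hi B st m).symm).symm
  have hrows : ∀ j, runnerBeta e B j ⊆ range N := fun j =>
    (runnerBeta_subset_range_sup B j).trans (range_subset_range.mpr (by omega))
  rw [hfold, ← pairEps_eq_of_subset_range (hrows _) (hrows _) (le_max_left N k),
    pairEps_eq_of_subset_range hP hQ (le_max_right N k)]

end Signature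

section RunnerPair

theorem two_le_pairEps_iff_of_abacusWeight_le_two :
    ∀ P ∈ (range 6).powersetCard 4, ∀ Q ∈ (range 7).powersetCard 5,
      abacusWeight 1 P + abacusWeight 1 Q ≤ 2 →
        (2 ≤ pairEps P Q 7 ↔ P = {0, 1, 2, 3} ∧ Q = {0, 1, 2, 4, 5}) := by
  decide

variable {e i : ℕ} {B : Finset ℕ}

lemma two_le_epsB_iff (h1 : 1 ≤ i) (hi : i < e) (hP : (runnerBeta e B (i - 1)).card = 4)
    (hQ : (runnerBeta e B i).card = 5)
    (hw : abacusWeight 1 (runnerBeta e B (i - 1)) + abacusWeight 1 (runnerBeta e B i) ≤ 2) :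
    2 ≤ epsB e B i ↔ runnerBeta e B (i - 1) = {0, 1, 2, 3} ∧ runnerBeta e B i = {0, 1, 2, 4, 5} := by
  have hP6 : runnerBeta e B (i - 1) ⊆ range 6 := by
    simpa [hP] using subset_range_of_abacusWeight_one_le (S := runnerBeta e B (i - 1)) (w := 2)
      (by omega)
  have hQ7 : runnerBeta e B i ⊆ range 7 := by
    simpa [hQ] using subset_range_of_abacusWeight_one_le (S := runnerBeta e B i) (w := 2)
      (by omega)
  rw [epsB_eq_pairEps h1 hi (hP6.trans (range_subset_range.mpr (by norm_num))) hQ7]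
  exact two_le_pairEps_iff_of_abacusWeight_le_two _ (mem_powersetCard.mpr ⟨hP6, hP⟩) _
    (mem_powersetCard.mpr ⟨hQ7, hQ⟩) hw

lemma two_le_abacusWeight_of_two_le_epsB (h1 : 1 ≤ i) (hi : i < e)
    (hP : (runnerBeta e B (i - 1)).card = 4) (hQ : (runnerBeta e B i).card = 5)
    (hε : 2 ≤ epsB e B i) :
    2 ≤ abacusWeight 1 (runnerBeta e B (i - 1)) + abacusWeight 1 (runnerBeta e B i) := by
  by_contra! hw
  obtain ⟨hP', hQ'⟩ := (two_le_epsB_iff h1 hi hP hQ hw.le).mp hε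
  rw [hP', hQ'] at hw
  exact absurd hw (by decide)

lemma two_le_epsB_of_runnerBeta_eq (h1 : 1 ≤ i) (hi : i < e)
    (hP : runnerBeta e B (i - 1) = {0, 1, 2, 3}) (hQ : runnerBeta e B i = {0, 1, 2, 4, 5}) :
    2 ≤ epsB e B i := by
  rw [epsB_eq_pairEps (k := 6) h1 hi (by rw [hP]; decide) (by rw [hQ]; decide), hP, hQ]
  decide

end RunnerPair

section Block

variable {e i j : ℕ} {bd : ℕ → ℕ} {B : Finset ℕ}

lemma eq_display_of_two_le_epsB (hi : 1 ≤ i) (hij : i + 1 < j) (hj : j < e)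
    (hcount : ∀ k < e, runnerCount e B k = bd k) (hweight : abacusWeight e B = 4)
    (hbi : bd (i - 1) = 4) (hbi' : bd i = 5) (hbj : bd (j - 1) = 4) (hbj' : bd j = 5)
    (hεi : 2 ≤ epsB e B i) (hεj : 2 ≤ epsB e B j) :
    B = display e bd (fun m => if m = i ∨ m = j then [1, 1] else []) := by
  have hcard : ∀ k < e, (runnerBeta e B k).card = bd k := fun k hk => by
    rw [← runnerCount_eq_card_runnerBeta hk, hcount k hk]
  have hS : ({i - 1, i, j - 1, j} : Finset ℕ) ⊆ range e := by
    intro k hk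
    simp only [mem_insert, mem_singleton] at hk
    exact mem_range.mpr (by omega)
  have hSsum : ∑ k ∈ {i - 1, i, j - 1, j}, abacusWeight 1 (runnerBeta e B k) =
      (abacusWeight 1 (runnerBeta e B (i - 1)) + abacusWeight 1 (runnerBeta e B i)) +
        (abacusWeight 1 (runnerBeta e B (j - 1)) + abacusWeight 1 (runnerBeta e B j)) := by
    rw [sum_insert (by simp; omega), sum_insert (by simp; omega), sum_insert (by simp; omega),
      sum_singleton, add_assoc]
  have hWi := two_le_abacusWeight_of_two_le_epsB hi (by omega)
    ((hcard _ (by omega)).trans hbi) ((hcard _ (by omega)).trans hbi') hεi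
  have hWj := two_le_abacusWeight_of_two_le_epsB (by omega) hj
    ((hcard _ (by omega)).trans hbj) ((hcard _ (by omega)).trans hbj') hεj
  have htotal := sum_sdiff hS (f := fun k => abacusWeight 1 (runnerBeta e B k))
  rw [sum_abacusWeight_one_runnerBeta (by omega), hweight, hSsum] at htotal
  obtain ⟨hPi, hQi⟩ := (two_le_epsB_iff hi (by omega) ((hcard _ (by omega)).trans hbi)
    ((hcard _ (by omega)).trans hbi') (by omega)).mp hεi
  obtain ⟨hPj, hQj⟩ := (two_le_epsB_iff (by omega) hj ((hcard _ (by omega)).trans hbj)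
    ((hcard _ (by omega)).trans hbj') (by omega)).mp hεj
  have hrest : ∑ k ∈ range e \ {i - 1, i, j - 1, j}, abacusWeight 1 (runnerBeta e B k) = 0 := by
    omega
  refine (eq_display_iff (by omega) B bd _).mpr fun k hk => ?_
  split_ifs with hkij
  · rcases hkij with rfl | rfl
    · rw [hQi, hbi']; decide
    · rw [hQj, hbj']; decide
  · rw [oneRunnerBeta_nil, ← hcard k hk]
    refine eq_range_of_abacusWeight_one_eq_zero ?_
    by_cases hkS : k ∈ ({i - 1, i, j - 1, j} : Finset ℕ)
    · obtain rfl | rfl : k = i - 1 ∨ k = j - 1 := by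
        simp only [mem_insert, mem_singleton] at hkS; omega
      · rw [hPi]; decide
      · rw [hPj]; decide
    · exact sum_eq_zero_iff.mp hrest k (mem_sdiff.mpr ⟨mem_range.mpr hk, hkS⟩)

lemma two_le_epsB_of_eq_display (hi : 1 ≤ i) (hij : i + 1 < j) (hj : j < e)
    (hbi : bd (i - 1) = 4) (hbi' : bd i = 5) (hbj : bd (j - 1) = 4) (hbj' : bd j = 5)
    (hB : B = display e bd (fun m => if m = i ∨ m = j then [1, 1] else [])) :
    2 ≤ epsB e B i ∧ 2 ≤ epsB e B j := by
  have hrow := (eq_display_iff (by omega) B bd _).mp hB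
  have hcore : ∀ k < e, k ≠ i → k ≠ j → bd k = 4 → runnerBeta e B k = {0, 1, 2, 3} := by
    intro k hk hki hkj h4
    rw [hrow k hk, if_neg (by tauto), oneRunnerBeta_nil, h4]
    decide
  have hpair : ∀ k < e, k = i ∨ k = j → bd k = 5 → runnerBeta e B k = {0, 1, 2, 4, 5} := by
    intro k hk hkij h5
    rw [hrow k hk, if_pos hkij, h5]
    decide
  exact ⟨two_le_epsB_of_runnerBeta_eq hi (by omega)
      (hcore _ (by omega) (by omega) (by omega) hbi) (hpair _ (by omega) (.inl rfl) hbi'),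
    two_le_epsB_of_runnerBeta_eq (by omega) hj
      (hcore _ (by omega) (by omega) (by omega) hbj) (hpair _ hj (.inr rfl) hbj')⟩

end Block

theorem stmt12_general (e a b c d : ℕ) (ha : 0 < a) (hab : a < b) (hbc : b < c)
    (hcd : c < d) (hde : d ≤ e) (bd : ℕ → ℕ)
    (hbd : bd = fun i => if i < a then 4 else if i < b then 5 else
      if i < c then 4 else if i < d then 5 else 4)
    (r : ℕ) (hr : r = (Finset.range e).sum bd)
    (lam : AbacusPartition) (hlam : inBlock e bd 4 lam)
    (B : Finset ℕ) (hB : B = lam.betaSet r) :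
    (2 ≤ epsB e B a ∧ 2 ≤ epsB e B c) ↔
      B = display e bd (fun m => if m = a ∨ m = c then [1, 1] else []) := by
  obtain ⟨-, hcount, hweight⟩ := hlam
  rw [← hr, ← hB] at hcount hweight
  have hbd4 : ∀ k, k < a ∨ b ≤ k ∧ k < c → bd k = 4 := by
    intro k hk
    simp only [hbd]
    split_ifs <;> omega
  have hbd5 : ∀ k, a ≤ k ∧ k < b ∨ c ≤ k ∧ k < d → bd k = 5 := by
    intro k hk
    simp only [hbd]
    split_ifs <;> omega
  have hac : a + 1 < c := by omega
  have hce : c < e := by omega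
  constructor
  · rintro ⟨hεa, hεc⟩
    exact eq_display_of_two_le_epsB ha hac hce hcount hweight (hbd4 _ (by omega))
      (hbd5 _ (by omega)) (hbd4 _ (by omega)) (hbd5 _ (by omega)) hεa hεc
  · exact two_le_epsB_of_eq_display ha hac hce (hbd4 _ (by omega)) (hbd5 _ (by omega))
      (hbd4 _ (by omega)) (hbd5 _ (by omega))

/-- the unique partition of the block
`⟨4^a, 5^{b−a}, 4^{c−b}, 5^{d−c}, 4^{e−d}⟩` exceptional for both of its
`[4:1]`-pairs (via runners `a` and `c`) is `⟨a_{(1,1)}, c_{(1,1)}⟩`. -/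
theorem stmt12 (e a b c d : ℕ) (he : 4 ≤ e) (ha : 0 < a) (hab : a < b) (hbc : b < c)
    (hcd : c < d) (hde : d ≤ e) (bd : ℕ → ℕ)
    (hbd : bd = fun i => if i < a then 4 else if i < b then 5 else
      if i < c then 4 else if i < d then 5 else 4)
    (r : ℕ) (hr : r = (Finset.range e).sum bd)
    (lam : AbacusPartition) (hlam : inBlock e bd 4 lam)
    (B : Finset ℕ) (hB : B = lam.betaSet r) :
    (2 ≤ epsB e B a ∧ 2 ≤ epsB e B c) ↔
      B = display e bd (fun m => if m = a ∨ m = c then [1, 1] else []) :=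
  stmt12_general e a b c d ha hab hbc hcd hde bd hbd r hr lam hlam B hB
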